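/- Let E be a row-finite directed graph without cycles and let V be a finite subset of E^0. Then the following are equivalent: (1) the subgraph E|_{VE^{≤∞}} has only finitely many splitting pairs of edges; (2) there exists a finite set F ⊆ E^* such that for every x, y ∈ VE^{≤∞} with x ∼ y, the pair (x, y) is a monolithic extension of a pair in F × F. -/

import Mathlib

/-- A directed graph: countable sets of vertices and edges, with range and source
maps. -/
structure DGraph : Type 1 where
  V : Type
  E : Type
  countableV : Countable V
  countableE : Countable E
  r : E → V
  s : E → V

namespace DGraph

/-- `E` is row-finite: every vertex receives only finitely many edges. -/
def RowFinite (G : DGraph) : Prop := ∀ v : G.V, {e : G.E | G.r e = v}.Finite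

/-- A source of `E`: a vertex receiving no edges. -/
def IsSource (G : DGraph) (v : G.V) : Prop := ∀ e : G.E, G.r e ≠ v

end DGraph

/-- A (finite or infinite) path in the directed graph `G`.  `edge i` is the
`(i+1)`-st edge of the path (or `none` beyond the end of the path); once `none`
always `none`, so a path is either a vertex (`rng`, with no edges), a finite path,
or an infinite path.  Edges are composed so that `s(edge i) = r(edge (i+1))`. -/
structure LPath (G : DGraph) where
  rng : G.V
  edge : ℕ → Option G.E
  edge_closed : ∀ i, edge i = none → edge (i + 1) = none
  rng_compat : ∀ e, edge 0 = some e → G.r e = rng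
  compat : ∀ i e f, edge i = some e → edge (i + 1) = some f → G.s e = G.r f

namespace LPath

variable {G : DGraph}

/-- The vertex `x(n)` of the path `x` (a junk value, the range, beyond the length
of the path). -/
def vert (x : LPath G) : ℕ → G.V
  | 0 => x.rng
  | n + 1 =>
    match x.edge n with
    | some e => G.s e
    | none => x.rng

/-- `x` is an infinite path, i.e. a member of `E^∞`. -/
def Infinite (x : LPath G) : Prop := ∀ i, (x.edge i).isSome

/-- `n ≤ |x|`: the first `n` edges of `x` all exist. -/
def LeLen (x : LPath G) (n : ℕ) : Prop := ∀ i, i < n → (x.edge i).isSome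

/-- `|x| = n`: `x` is a finite path of length `n`. -/
def LenEq (x : LPath G) (n : ℕ) : Prop := x.edge n = none ∧ x.LeLen n

theorem vert_eq (x : LPath G) (m : ℕ) (e : G.E) (h : x.edge m = some e) :
    G.r e = x.vert m := by
  cases m with
  | zero => exact x.rng_compat e h
  | succ n =>
    cases hn : x.edge n with
    | none => exact absurd h (by simp [x.edge_closed n hn])
    | some f =>
      have hc := x.compat n f e hn h
      simp only [vert, hn]
      exact hc.symm

/-- The shifted path `σ^m(x)` (meaningful when `m ≤ |x|`). -/
def shift (x : LPath G) (m : ℕ) : LPath G where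
  rng := x.vert m
  edge i := x.edge (m + i)
  edge_closed i h := x.edge_closed (m + i) h
  rng_compat e he := x.vert_eq m e he
  compat i e f he hf := x.compat (m + i) e f he hf

/-- `x` is shift equivalent to `y` with lag `n ∈ ℤ`: there are `p, q ∈ ℕ` with
`p - q = n`, `p ≤ |x|`, `q ≤ |y|` and `σ^p(x) = σ^q(y)`. -/
def ShiftEquivLag (x y : LPath G) (n : ℤ) : Prop :=
  ∃ p q : ℕ, (p : ℤ) - (q : ℤ) = n ∧ x.LeLen p ∧ y.LeLen q ∧ x.shift p = y.shift q

/-- `x` is shift equivalent to `y`. -/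
def ShiftEquiv (x y : LPath G) : Prop := ∃ n : ℤ, ShiftEquivLag x y n

/-- `x` belongs to `E^{≤∞}`: it is infinite, or finite with its source a source
of the graph. -/
def Boundary (x : LPath G) : Prop :=
  x.Infinite ∨ ∃ n : ℕ, x.LenEq n ∧ G.IsSource (x.vert n)

/-- `x` is frequently divertable to `[y]`: for every `n ≤ |x|` there is a path in
`x(n)E^{≤∞}` that is shift equivalent to `y`. -/
def FreqDiv (x y : LPath G) : Prop :=
  ∀ n : ℕ, x.LeLen n → ∃ z : LPath G, z.Boundary ∧ z.rng = x.vert n ∧ ShiftEquiv z y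

/-- The segment `x(m, n)` of `x` is a cycle: it is closed (`x(m) = x(n)`) and the
sources `x(i)`, `m < i ≤ n`, of its edges are pairwise distinct. -/
def HasCycleAt (x : LPath G) (m n : ℕ) : Prop :=
  m < n ∧ x.LeLen n ∧ x.vert m = x.vert n ∧
    ∀ i j, m < i → i ≤ n → m < j → j ≤ n → x.vert i = x.vert j → i = j

/-- `x` contains a cycle. -/
def ContainsCycle (x : LPath G) : Prop := ∃ m n, x.HasCycleAt m n

end LPath

/-- A cycle in `G`: a finite path `α = α_1 ⋯ α_len` (here 0-indexed, and with junk
values of `edge` beyond `len`) of non-zero length with `r(α) = s(α)` and whose edges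
have pairwise distinct sources. -/
structure DCycle (G : DGraph) where
  len : ℕ
  len_pos : 0 < len
  edge : ℕ → G.E
  compat : ∀ i, i + 1 < len → G.s (edge i) = G.r (edge (i + 1))
  closed : G.s (edge (len - 1)) = G.r (edge 0)
  distinct : ∀ i j, i < len → j < len → G.s (edge i) = G.s (edge j) → i = j

namespace DCycle

variable {G : DGraph}

/-- `f` is an entry to the cycle `c`: `r(f) = r(c_i)` and `f ≠ c_i` for some `i`. -/
def IsEntry (c : DCycle G) (f : G.E) : Prop :=
  ∃ i, i < c.len ∧ G.r f = G.r (c.edge i) ∧ f ≠ c.edge i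

/-- The edge `f` lies in the cycle `c`. -/
def EdgeMem (c : DCycle G) (f : G.E) : Prop := ∃ i, i < c.len ∧ c.edge i = f

end DCycle

/-- `(x, y)` is a monolithic extension of the pair `(α, β)` of finite paths:
`|α| ≤ |x|`, `|β| ≤ |y|`, `x(0, |α|) = α`, `y(0, |β|) = β` and
`σ^{|α|}(x) = σ^{|β|}(y)` (i.e. `x = αz` and `y = βz` for a common tail `z`). -/
def IsMonoExtOf {G : DGraph} (x y α β : LPath G) : Prop :=
  ∃ a b : ℕ, α.LenEq a ∧ β.LenEq b ∧ x.LeLen a ∧ y.LeLen b ∧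
    x.rng = α.rng ∧ (∀ i, i < a → x.edge i = α.edge i) ∧
    y.rng = β.rng ∧ (∀ i, i < b → y.edge i = β.edge i) ∧
    x.shift a = y.shift b

/-- An edge occurring in some path of `VE^{≤∞}`, i.e. an edge of the subgraph
`E|_{VE^{≤∞}}`. -/
def EdgeOfSub {G : DGraph} (V : Set G.V) (e : G.E) : Prop :=
  ∃ x : LPath G, x.Boundary ∧ x.rng ∈ V ∧ ∃ i, x.edge i = some e

/-!
Without cycles a path never returns to a vertex, so it uses at most one edge out of each
vertex. For (1) ⇒ (2), cut shift-equivalent `x, y ∈ VE^{≤∞}` at the first place where their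
tails agree. Unless one of the two cuts is trivial, the last edges before it differ and leave the
same vertex, i.e. form a splitting pair. So both prefixes are paths in `E|_{VE^{≤∞}}` from `V`
to a vertex of `V` or a splitting vertex, and such a path is determined by its endpoints and by
the edges it takes out of the finitely many splitting vertices: out of any other vertex the
subgraph has at most one edge. For (2) ⇒ (1), given a splitting pair `f, g`, follow paths
through `f` and through `g` into a common tail at `s f = s g`. In a monolithic extension of
this pair, neither `f` nor `g` can lie in the common tail, since then both would be edges of
one path with the same source; so `f` and `g` are edges of the finitely many paths of `F`.
-/

namespace LPath

variable {G : DGraph} {x y : LPath G}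

theorem ext (h₁ : x.rng = y.rng) (h₂ : ∀ i, x.edge i = y.edge i) : x = y := by
  cases x; cases y
  simp only [mk.injEq]
  exact ⟨h₁, funext h₂⟩

def edges (x : LPath G) : Set G.E := {e | ∃ i, x.edge i = some e}

theorem edge_eq_none_of_le {i j : ℕ} (h : x.edge i = none) (hij : i ≤ j) : x.edge j = none := by
  induction j, hij using Nat.le_induction with
  | base => exact h
  | succ n _ ih => exact x.edge_closed n ih

theorem LeLen.mono {m n : ℕ} (h : x.LeLen n) (hmn : m ≤ n) : x.LeLen m :=
  fun i hi => h i (hi.trans_le hmn)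

theorem LeLen.exists_edge {n i : ℕ} (h : x.LeLen n) (hi : i < n) : ∃ e, x.edge i = some e :=
  Option.isSome_iff_exists.1 (h i hi)

theorem leLen_succ_of_edge_eq_some {i : ℕ} {e : G.E} (h : x.edge i = some e) :
    x.LeLen (i + 1) := by
  intro k hk
  rw [← Option.ne_none_iff_isSome]
  intro hk'
  rw [edge_eq_none_of_le hk' (by omega : k ≤ i)] at h
  cases h

theorem LeLen.le_of_edge_eq_none {m n : ℕ} (h : x.LeLen m) (hn : x.edge n = none) : m ≤ n := by
  by_contra hlt
  simpa [hn] using h n (by omega)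

theorem LenEq.unique {m n : ℕ} (hm : x.LenEq m) (hn : x.LenEq n) : m = n :=
  le_antisymm (hm.2.le_of_edge_eq_none hn.1) (hn.2.le_of_edge_eq_none hm.1)

theorem LenEq.edges_finite {n : ℕ} (h : x.LenEq n) : x.edges.Finite := by
  refine (((Set.finite_Iio n).image x.edge).preimage (Option.some_injective _).injOn).subset ?_
  rintro e ⟨i, hi⟩
  refine ⟨i, ?_, hi⟩
  by_contra hin
  rw [edge_eq_none_of_le h.1 (not_lt.1 hin)] at hi
  cases hi

/-- The length of a finite path; `0`, a junk value, for an infinite one. -/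
noncomputable def len (x : LPath G) : ℕ := sInf {n | x.edge n = none}

theorem LenEq.len_eq {n : ℕ} (h : x.LenEq n) : x.len = n :=
  le_antisymm (Nat.sInf_le h.1) (le_csInf ⟨n, h.1⟩ fun _ hm => h.2.le_of_edge_eq_none hm)

theorem vert_succ {m : ℕ} {e : G.E} (h : x.edge m = some e) : x.vert (m + 1) = G.s e := by
  simp [vert, h]

theorem shift_vert {m k : ℕ} (h : x.LeLen (m + k)) : (x.shift m).vert k = x.vert (m + k) := by
  cases k with
  | zero => rfl
  | succ k =>
    obtain ⟨e, he⟩ := h.exists_edge (by omega : m + k < m + (k + 1))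
    rw [vert_succ (show (x.shift m).edge k = some e from he), ← Nat.add_assoc, vert_succ he]

theorem shift_eq_shift_of_edge_eq {p q : ℕ} {e : G.E} (hx : x.edge p = some e)
    (hy : y.edge q = some e) (h : x.shift (p + 1) = y.shift (q + 1)) :
    x.shift p = y.shift q := by
  refine ext ((x.vert_eq p e hx).symm.trans (y.vert_eq q e hy)) fun k => ?_
  cases k with
  | zero => exact hx.trans hy.symm
  | succ k =>
    have := congrArg (fun z : LPath G => z.edge k) h
    simpa only [shift, Nat.add_assoc, Nat.add_comm 1 k] using this

theorem HasCycleAt.nonempty_dCycle {m n : ℕ} (h : x.HasCycleAt m n) : Nonempty (DCycle G) := by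
  obtain ⟨hmn, hlen, hclosed, hdistinct⟩ := h
  obtain ⟨e₀, he₀⟩ := hlen.exists_edge hmn
  have hedge : ∀ i < n - m, x.edge (m + i) = some ((x.edge (m + i)).getD e₀) := fun i hi =>
    (Option.getD_of_ne_none (Option.ne_none_iff_isSome.2 (hlen _ (by omega))) e₀).symm
  have hsrc : ∀ i < n - m, G.s ((x.edge (m + i)).getD e₀) = x.vert (m + i + 1) := fun i hi =>
    (vert_succ (hedge i hi)).symm
  refine ⟨⟨n - m, by omega, fun i => (x.edge (m + i)).getD e₀, fun i hi => ?_, ?_, ?_⟩⟩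
  · exact x.compat _ _ _ (hedge i (by omega)) (by rw [← Nat.add_assoc]; exact hedge _ hi)
  · rw [hsrc _ (by omega), show m + (n - m - 1) + 1 = n by omega, ← hclosed,
      x.vert_eq m _ (by simpa using hedge 0 (by omega))]
  · intro i j hi hj hij
    rw [hsrc i hi, hsrc j hj] at hij
    have := hdistinct _ _ (by omega) (by omega) (by omega) (by omega) hij
    omega

theorem containsCycle_of_vert_eq {a b : ℕ} (hb : x.LeLen b) (hab : a < b)
    (h : x.vert a = x.vert b) : x.ContainsCycle := by
  induction hk : b - a using Nat.strong_induction_on generalizing a b with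
  | _ k ih =>
    by_cases hmin : ∀ i j, a < i → i ≤ b → a < j → j ≤ b → x.vert i = x.vert j → i = j
    · exact ⟨a, b, hab, hb, h, hmin⟩
    push Not at hmin
    obtain ⟨i, j, hai, hib, haj, hjb, hij, hne⟩ := hmin
    rcases Nat.lt_or_gt_of_ne hne with hlt | hlt
    · exact ih (j - i) (by omega) (hb.mono hjb) hlt hij rfl
    · exact ih (i - j) (by omega) (hb.mono hib) hlt hij.symm rfl

theorem vert_injOn (hnc : IsEmpty (DCycle G)) {N : ℕ} (hN : x.LeLen N) :
    Set.InjOn x.vert (Set.Iic N) := by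
  have key : ∀ a b, a < b → b ≤ N → x.vert a ≠ x.vert b := fun a b hab hb h => by
    obtain ⟨m, n, hc⟩ := containsCycle_of_vert_eq (hN.mono hb) hab h
    exact hnc.false hc.nonempty_dCycle.some
  intro a ha b hb h
  rcases lt_trichotomy a b with hab | rfl | hab
  · exact absurd h (key a b hab hb)
  · rfl
  · exact absurd h.symm (key b a hab ha)

theorem source_injOn_edges (hnc : IsEmpty (DCycle G)) : Set.InjOn G.s x.edges := by
  rintro e ⟨i, hi⟩ f ⟨j, hj⟩ hef
  have hlen : x.LeLen (max i j + 1) := by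
    rcases le_total i j with h | h
    · simpa [max_eq_right h] using leLen_succ_of_edge_eq_some hj
    · simpa [max_eq_left h] using leLen_succ_of_edge_eq_some hi
  have hij : i + 1 = j + 1 := vert_injOn hnc hlen (by simp) (by simp)
    (by rw [vert_succ hi, vert_succ hj, hef])
  cases Nat.succ_injective hij
  exact Option.some_injective _ (hi.symm.trans hj)

/-- The prefix `x(0, n)` of `x`. -/
def trunc (x : LPath G) (n : ℕ) : LPath G where
  rng := x.rng
  edge i := if i < n then x.edge i else none
  edge_closed i h := by
    split_ifs at h ⊢ with h₁ h₂
    · exact x.edge_closed i h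
    · omega
    · rfl
    · rfl
  rng_compat e he := by
    split_ifs at he
    exact x.rng_compat e he
  compat i e f he hf := by
    split_ifs at he hf
    exact x.compat i e f he hf

theorem trunc_edge_of_lt {n i : ℕ} (h : i < n) : (x.trunc n).edge i = x.edge i := if_pos h

theorem trunc_edge_of_le {n i : ℕ} (h : n ≤ i) : (x.trunc n).edge i = none :=
  if_neg (by omega)

theorem edges_trunc_subset (n : ℕ) : (x.trunc n).edges ⊆ x.edges := by
  rintro e ⟨i, hi⟩
  by_cases h : i < n
  · exact ⟨i, by rwa [trunc_edge_of_lt h] at hi⟩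
  · rw [trunc_edge_of_le (not_lt.1 h)] at hi
    cases hi

theorem lenEq_trunc {n : ℕ} (h : x.LeLen n) : (x.trunc n).LenEq n :=
  ⟨trunc_edge_of_le le_rfl, fun i hi => by rw [trunc_edge_of_lt hi]; exact h i hi⟩

theorem trunc_vert {n k : ℕ} (hk : k ≤ n) : (x.trunc n).vert k = x.vert k := by
  cases k with
  | zero => rfl
  | succ k =>
    change (match (x.trunc n).edge k with | some e => G.s e | none => x.rng) = _
    rw [trunc_edge_of_lt (by omega : k < n)]
    rfl

/-- The path `x(0, n) z`. -/
def cat (x : LPath G) (n : ℕ) (z : LPath G) (hx : x.LeLen n) (hz : z.rng = x.vert n) :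
    LPath G where
  rng := x.rng
  edge i := if i < n then x.edge i else z.edge (i - n)
  edge_closed i h := by
    by_cases hi : i < n
    · rw [if_pos hi] at h
      simpa [h] using hx i hi
    · rw [if_neg hi] at h
      rw [if_neg (by omega), show i + 1 - n = i - n + 1 by omega]
      exact z.edge_closed _ h
  rng_compat e he := by
    split_ifs at he with h
    · exact x.rng_compat e he
    · obtain rfl : n = 0 := by omega
      exact (z.rng_compat e he).trans hz
  compat i e f he hf := by
    split_ifs at he hf with h₁ h₂ h₂
    · exact x.compat i e f he hf
    · rw [show i + 1 - n = 0 by omega] at hf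
      rw [z.rng_compat f hf, hz, show n = i + 1 by omega, vert_succ he]
    · omega
    · rw [show i + 1 - n = i - n + 1 by omega] at hf
      exact z.compat _ e f he hf

section Cat

variable {z : LPath G} {n : ℕ} {hx : x.LeLen n} {hz : z.rng = x.vert n}

theorem cat_edge_of_lt {i : ℕ} (h : i < n) : (x.cat n z hx hz).edge i = x.edge i := if_pos h

theorem leLen_cat : (x.cat n z hx hz).LeLen n := fun i hi => by
  rw [cat_edge_of_lt hi]
  exact hx i hi

theorem cat_shift : (x.cat n z hx hz).shift n = z := by
  refine ext ?_ fun i => ?_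
  · change (x.cat n z hx hz).vert n = z.rng
    rw [hz]
    cases n with
    | zero => rfl
    | succ k =>
      obtain ⟨e, he⟩ := hx.exists_edge (by omega : k < k + 1)
      rw [vert_succ (show (x.cat (k + 1) z hx hz).edge k = some e by
        rw [cat_edge_of_lt (by omega)]; exact he), vert_succ he]
  · change (if n + i < n then _ else _) = _
    rw [if_neg (by omega), Nat.add_sub_cancel_left]

end Cat

theorem infinite_shift_iff {m : ℕ} (h : x.LeLen m) : (x.shift m).Infinite ↔ x.Infinite := by
  refine ⟨fun hs i => ?_, fun hx i => hx (m + i)⟩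
  by_cases hi : i < m
  · exact h i hi
  · simpa [shift, Nat.add_sub_cancel' (not_lt.1 hi)] using hs (i - m)

theorem lenEq_shift_iff {m k : ℕ} (h : x.LeLen m) : (x.shift m).LenEq k ↔ x.LenEq (m + k) := by
  refine ⟨fun hk => ⟨hk.1, fun i hi => ?_⟩,
    fun hk => ⟨hk.1, fun i hi => hk.2 (m + i) (by omega)⟩⟩
  by_cases him : i < m
  · exact h i him
  · simpa [shift, Nat.add_sub_cancel' (not_lt.1 him)] using hk.2 (i - m) (by omega)

theorem boundary_shift_iff {m : ℕ} (h : x.LeLen m) : (x.shift m).Boundary ↔ x.Boundary := by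
  refine or_congr (infinite_shift_iff h) ⟨fun ⟨k, hk, hsrc⟩ => ?_, fun ⟨n, hn, hsrc⟩ => ?_⟩
  · rw [lenEq_shift_iff h] at hk
    exact ⟨m + k, hk, by rwa [shift_vert hk.2] at hsrc⟩
  · obtain ⟨k, rfl⟩ := Nat.exists_eq_add_of_le (h.le_of_edge_eq_none hn.1)
    exact ⟨k, (lenEq_shift_iff h).2 hn, by rwa [shift_vert hn.2]⟩

/-- Induction on length: the last edges leave the same vertex, so they agree by `hcoh`. -/
theorem eq_of_endpoints_eq (hnc : IsEmpty (DCycle G)) {m n : ℕ}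
    (hx : x.LenEq m) (hy : y.LenEq n) (hrng : x.rng = y.rng) (hend : x.vert m = y.vert n)
    (hcoh : ∀ e ∈ x.edges, ∀ f ∈ y.edges, G.s e = G.s f → e = f) : x = y := by
  induction m generalizing n x y with
  | zero =>
    obtain rfl : 0 = n := vert_injOn hnc hy.2 (by simp) (by simp) (hrng.symm.trans hend)
    exact ext hrng fun i => by
      rw [edge_eq_none_of_le hx.1 i.zero_le, edge_eq_none_of_le hy.1 i.zero_le]
  | succ k ih =>
    cases n with
    | zero =>
      have : 0 = k + 1 :=
        vert_injOn hnc hx.2 (by simp) (by simp) (hrng.trans hend.symm)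
      omega
    | succ l =>
      obtain ⟨e, he⟩ := hx.2.exists_edge (Nat.lt_succ_self k)
      obtain ⟨f, hf⟩ := hy.2.exists_edge (Nat.lt_succ_self l)
      obtain rfl : e = f :=
        hcoh e ⟨k, he⟩ f ⟨l, hf⟩ (by rw [← vert_succ he, ← vert_succ hf, hend])
      have htrunc : x.trunc k = y.trunc l := ih (lenEq_trunc (hx.2.mono k.le_succ))
        (lenEq_trunc (hy.2.mono l.le_succ)) hrng
        (by rw [trunc_vert le_rfl, trunc_vert le_rfl, ← x.vert_eq k e he, y.vert_eq l e hf])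
        fun e' he' f' hf' => hcoh e' (edges_trunc_subset k he') f' (edges_trunc_subset l hf')
      obtain rfl : k = l := (lenEq_trunc (hx.2.mono k.le_succ)).unique
        (htrunc ▸ lenEq_trunc (hy.2.mono l.le_succ))
      refine ext hrng fun i => ?_
      rcases lt_trichotomy i k with hi | rfl | hi
      · have := congrArg (fun z : LPath G => z.edge i) htrunc
        simpa only [trunc_edge_of_lt hi] using this
      · exact he.trans hf.symm
      · rw [edge_eq_none_of_le hx.1 hi, edge_eq_none_of_le hy.1 hi]

end LPath

section Splitting

open LPath

variable {G : DGraph} (V : Set G.V)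

/-- The splitting pairs of `E|_{VE^{≤∞}}`, as ordered pairs. -/
def splittingPairs : Set (G.E × G.E) :=
  {p | p.1 ≠ p.2 ∧ G.s p.1 = G.s p.2 ∧ EdgeOfSub V p.1 ∧ EdgeOfSub V p.2}

def splittingEdges : Set G.E := Prod.fst '' splittingPairs V

def splittingVerts : Set G.V := G.s '' splittingEdges V

def canonicalPrefixes : Set (LPath G) :=
  {α | ∃ n, α.LenEq n ∧ α.rng ∈ V ∧ (∀ e ∈ α.edges, EdgeOfSub V e) ∧
    α.vert n ∈ V ∪ splittingVerts V}

variable {V}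

theorem source_mem_splittingVerts {e f : G.E} (hef : e ≠ f) (hs : G.s e = G.s f)
    (he : EdgeOfSub V e) (hf : EdgeOfSub V f) : G.s e ∈ splittingVerts V :=
  ⟨e, ⟨(e, f), ⟨hef, hs, he, hf⟩, rfl⟩, rfl⟩

theorem mem_splittingEdges {e : G.E} (he : EdgeOfSub V e) (hs : G.s e ∈ splittingVerts V) :
    e ∈ splittingEdges V := by
  obtain ⟨f, ⟨⟨f, g⟩, hfg, rfl⟩, hef⟩ := hs
  by_cases h : e = f
  · exact ⟨(f, g), hfg, h.symm⟩
  · exact ⟨(e, f), ⟨h, hef.symm, he, hfg.2.2.1⟩, rfl⟩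

theorem eq_of_source_eq_of_notMem_splittingVerts {e f : G.E} (he : EdgeOfSub V e)
    (hf : EdgeOfSub V f) (hs : G.s e = G.s f) (hv : G.s e ∉ splittingVerts V) : e = f := by
  by_contra hef
  exact hv (source_mem_splittingVerts hef hs he hf)

theorem canonicalPrefixes_finite (hnc : IsEmpty (DCycle G)) (hV : V.Finite)
    (hfin : (splittingPairs V).Finite) : (canonicalPrefixes V).Finite := by
  have hE : (splittingEdges V).Finite := hfin.image _
  refine Set.Finite.of_finite_image
    (f := fun α : LPath G => (α.rng, α.vert α.len, α.edges ∩ splittingEdges V))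
    ((hV.prod ((hV.union (hE.image G.s)).prod hE.finite_subsets)).subset ?_) ?_
  · rintro _ ⟨α, ⟨n, hn, hrng, -, hend⟩, rfl⟩
    exact ⟨hrng, show α.vert α.len ∈ _ by rwa [hn.len_eq], Set.inter_subset_right⟩
  · rintro α ⟨m, hm, -, hα, -⟩ β ⟨n, hn, -, hβ, -⟩ h
    simp only [Prod.mk.injEq, hm.len_eq, hn.len_eq] at h
    obtain ⟨hrng, hend, hsplit⟩ := h
    refine eq_of_endpoints_eq hnc hm hn hrng hend fun e he f hf hs => ?_
    by_cases hv : G.s e ∈ splittingVerts V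
    · have heβ : e ∈ β.edges ∩ splittingEdges V :=
        hsplit ▸ ⟨he, mem_splittingEdges (hα e he) hv⟩
      exact source_injOn_edges hnc heβ.1 hf hs
    · exact eq_of_source_eq_of_notMem_splittingVerts (hα e he) (hβ f hf) hs hv

theorem trunc_mem_canonicalPrefixes {x : LPath G} (hx : x.Boundary) (hxV : x.rng ∈ V) {n : ℕ}
    (hn : x.LeLen n) (hend : x.vert n ∈ V ∪ splittingVerts V) :
    x.trunc n ∈ canonicalPrefixes V :=
  ⟨n, lenEq_trunc hn, hxV, fun _ he => ⟨x, hx, hxV, edges_trunc_subset n he⟩,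
    by rwa [trunc_vert le_rfl]⟩

theorem source_mem_splittingVerts_of_merge {x y : LPath G} (hx : x.Boundary) (hy : y.Boundary)
    (hxV : x.rng ∈ V) (hyV : y.rng ∈ V) {p q : ℕ} {e f : G.E} (he : x.edge p = some e)
    (hf : y.edge q = some f) (hmerge : x.shift (p + 1) = y.shift (q + 1))
    (hne : x.shift p ≠ y.shift q) : x.vert (p + 1) ∈ splittingVerts V := by
  have hef : e ≠ f := by
    rintro rfl
    exact hne (shift_eq_shift_of_edge_eq he hf hmerge)
  rw [vert_succ he]
  refine source_mem_splittingVerts hef ?_ ⟨x, hx, hxV, p, he⟩ ⟨y, hy, hyV, q, hf⟩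
  rw [← vert_succ he, ← vert_succ hf]
  exact congrArg LPath.rng hmerge

theorem exists_monoExt_canonicalPrefixes {x y : LPath G} (hx : x.Boundary) (hy : y.Boundary)
    (hxV : x.rng ∈ V) (hyV : y.rng ∈ V) (hxy : x.ShiftEquiv y) :
    ∃ α ∈ canonicalPrefixes V, ∃ β ∈ canonicalPrefixes V, IsMonoExtOf x y α β := by
  classical
  have hex : ∃ p q, x.LeLen p ∧ y.LeLen q ∧ x.shift p = y.shift q := by
    obtain ⟨_, p, q, -, hp, hq, h⟩ := hxy
    exact ⟨p, q, hp, hq, h⟩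
  obtain ⟨q, hp, hq, hpq⟩ := Nat.find_spec hex
  set p := Nat.find hex
  have hvert : x.vert p = y.vert q := congrArg LPath.rng hpq
  have hend : x.vert p ∈ V ∪ splittingVerts V := by
    rcases Nat.eq_zero_or_pos p with hp0 | hp0
    · exact Or.inl (by rw [hp0]; exact hxV)
    rcases Nat.eq_zero_or_pos q with hq0 | hq0
    · exact Or.inl (by rw [hvert, hq0]; exact hyV)
    obtain ⟨e, he⟩ := hp.exists_edge (Nat.sub_one_lt_of_lt hp0)
    obtain ⟨f, hf⟩ := hq.exists_edge (Nat.sub_one_lt_of_lt hq0)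
    have hsplit := source_mem_splittingVerts_of_merge hx hy hxV hyV he hf
      (by rwa [Nat.sub_add_cancel hp0, Nat.sub_add_cancel hq0]) fun h =>
        Nat.find_min hex (Nat.sub_one_lt_of_lt hp0)
          ⟨q - 1, hp.mono (Nat.sub_le p 1), hq.mono (Nat.sub_le q 1), h⟩
    rw [Nat.sub_add_cancel hp0] at hsplit
    exact Or.inr hsplit
  refine ⟨x.trunc p, trunc_mem_canonicalPrefixes hx hxV hp hend,
    y.trunc q, trunc_mem_canonicalPrefixes hy hyV hq (hvert ▸ hend),
    p, q, lenEq_trunc hp, lenEq_trunc hq, hp, hq,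
    rfl, fun _ hi => (trunc_edge_of_lt hi).symm, rfl, fun _ hi => (trunc_edge_of_lt hi).symm, hpq⟩

theorem lt_of_shift_eq_of_splitting (hnc : IsEmpty (DCycle G)) {x y : LPath G} {a b i : ℕ}
    (hab : x.shift a = y.shift b) {e f : G.E} (he : x.edge i = some e) (hf : f ∈ y.edges)
    (hef : e ≠ f) (hs : G.s e = G.s f) : i < a := by
  by_contra hia
  have hey : e ∈ y.edges := by
    refine ⟨b + (i - a), ?_⟩
    have := congrArg (fun z : LPath G => z.edge (i - a)) hab
    change x.edge (a + (i - a)) = y.edge (b + (i - a)) at this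
    rw [← this, Nat.add_sub_cancel' (not_lt.1 hia), he]
  exact hef (source_injOn_edges hnc hey hf hs)

theorem splittingPairs_finite_of_monoExt (hnc : IsEmpty (DCycle G)) {F : Set (LPath G)}
    (hF : F.Finite) (hFlen : ∀ α ∈ F, ∃ n : ℕ, α.LenEq n)
    (hext : ∀ x y : LPath G, x.Boundary → y.Boundary → x.rng ∈ V → y.rng ∈ V →
      x.ShiftEquiv y → ∃ α ∈ F, ∃ β ∈ F, IsMonoExtOf x y α β) :
    (splittingPairs V).Finite := by
  have hE : (⋃ α ∈ F, α.edges).Finite :=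
    hF.biUnion fun α hα => (hFlen α hα).choose_spec.edges_finite
  refine (hE.prod hE).subset ?_
  rintro ⟨f, g⟩ ⟨hfg, hs, ⟨x, hx, hxV, i, hi⟩, ⟨y₀, -, hy₀V, j, hj⟩⟩
  have hz : (x.shift (i + 1)).rng = y₀.vert (j + 1) := by
    change x.vert (i + 1) = _
    rw [vert_succ hi, vert_succ hj, hs]
  set y := y₀.cat (j + 1) (x.shift (i + 1)) (leLen_succ_of_edge_eq_some hj) hz
  have hy : y.Boundary := (boundary_shift_iff leLen_cat).1
    (cat_shift ▸ (boundary_shift_iff (leLen_succ_of_edge_eq_some hi)).2 hx)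
  have hyj : y.edge j = some g := (cat_edge_of_lt (Nat.lt_succ_self j)).trans hj
  obtain ⟨α, hα, β, hβ, a, b, -, -, -, -, -, hxα, -, hyβ, hab⟩ := hext x y hx hy hxV hy₀V
    ⟨_, i + 1, j + 1, rfl, leLen_succ_of_edge_eq_some hi, leLen_cat, cat_shift.symm⟩
  have hia : i < a := lt_of_shift_eq_of_splitting hnc hab hi ⟨j, hyj⟩ hfg hs
  have hjb : j < b := lt_of_shift_eq_of_splitting hnc hab.symm hyj ⟨i, hi⟩ (Ne.symm hfg) hs.symm
  exact ⟨Set.mem_biUnion hα ⟨i, (hxα i hia).symm.trans hi⟩,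
    Set.mem_biUnion hβ ⟨j, (hyβ j hjb).symm.trans hyj⟩⟩

end Splitting

theorem stmt19_general (G : DGraph) (hnc : IsEmpty (DCycle G))
    (V : Set G.V) (hV : V.Finite) :
    ({p : G.E × G.E | p.1 ≠ p.2 ∧ G.s p.1 = G.s p.2 ∧
        EdgeOfSub V p.1 ∧ EdgeOfSub V p.2}.Finite) ↔
    (∃ F : Set (LPath G), F.Finite ∧ (∀ f ∈ F, ∃ n : ℕ, f.LenEq n) ∧
      ∀ x y : LPath G, x.Boundary → y.Boundary → x.rng ∈ V → y.rng ∈ V →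
        LPath.ShiftEquiv x y →
        ∃ α ∈ F, ∃ β ∈ F, IsMonoExtOf x y α β) := by
  constructor
  · intro hfin
    exact ⟨canonicalPrefixes V, canonicalPrefixes_finite hnc hV hfin,
      fun α ⟨n, hn, _⟩ => ⟨n, hn⟩,
      fun _ _ => exists_monoExt_canonicalPrefixes⟩
  · rintro ⟨F, hF, hFlen, hext⟩
    exact splittingPairs_finite_of_monoExt hnc hF hFlen hext

/-- Let `E` be a row-finite directed graph with no cycles and let `V ⊆ E^0` be finite.
The following are equivalent: (1) the subgraph `E|_{VE^{≤∞}}` has only finitely many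
splitting pairs of edges; (2) there is a finite set `F` of finite paths such that
every pair `(x, y)` of shift-equivalent paths in `VE^{≤∞}` is a monolithic extension
of a pair in `F × F`. -/
theorem stmt19 (G : DGraph) (hrf : G.RowFinite) (hnc : IsEmpty (DCycle G))
    (V : Set G.V) (hV : V.Finite) :
    ({p : G.E × G.E | p.1 ≠ p.2 ∧ G.s p.1 = G.s p.2 ∧
        EdgeOfSub V p.1 ∧ EdgeOfSub V p.2}.Finite) ↔
    (∃ F : Set (LPath G), F.Finite ∧ (∀ f ∈ F, ∃ n : ℕ, f.LenEq n) ∧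
      ∀ x y : LPath G, x.Boundary → y.Boundary → x.rng ∈ V → y.rng ∈ V →
        LPath.ShiftEquiv x y →
        ∃ α ∈ F, ∃ β ∈ F, IsMonoExtOf x y α β) :=
  stmt19_general G hnc V hV
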